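/- Let d ≥ 2 and let 𝒞 : Matrix d d ℂ → Matrix d d ℂ be a linear map satisfying 𝒞(U ρ U†) = U 𝒞(ρ) U† for every unitary U ∈ Matrix d d ℂ and every ρ ∈ Matrix d d ℂ. Then there exist scalars α, β ∈ ℂ such that the Choi operator of 𝒞 equals C = α (1/d) |I⟩⟩⟨⟨I| + β (I_{d²} − (1/d) |I⟩⟩⟨⟨I|); moreover, if 𝒞 is trace preserving then α + (d² − 1)β = d, and if 𝒞 is completely positive then α, β ≥ 0. -/

import Mathlib

open ComplexOrder

noncomputable section

/-- Choi operator `∑ i j, F(E i j) ⊗ E i j` of a map between matrix algebras,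
where `E i j` are the matrix units. -/
def choiFun {I O : Type} [Fintype I] [DecidableEq I]
    (F : Matrix I I ℂ → Matrix O O ℂ) : Matrix (O × I) (O × I) ℂ :=
  ∑ i : I, ∑ j : I,
    Matrix.kroneckerMap (· * ·) (F (Matrix.single i j 1)) (Matrix.single i j 1)

/-- The extension `F ⊗ id` of a map on matrices, acting on a composite system. -/
def tensorId {I O K : Type} (F : Matrix I I ℂ → Matrix O O ℂ)
    (M : Matrix (I × K) (I × K) ℂ) : Matrix (O × K) (O × K) ℂ :=
  fun p q => F (fun i j => M (i, p.2) (j, q.2)) p.1 q.1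

/-- Complete positivity of a linear map between matrix algebras: for every
`k ∈ ℕ`, `F ⊗ id_{Matrix (Fin k) (Fin k) ℂ}` preserves positive semidefiniteness. -/
def IsCPMap {I O : Type} [Fintype I] [Fintype O]
    (F : Matrix I I ℂ →ₗ[ℂ] Matrix O O ℂ) : Prop :=
  ∀ (k : ℕ) (M : Matrix (I × Fin k) (I × Fin k) ℂ),
    M.PosSemidef → (tensorId (⇑F) M).PosSemidef

/-- Quantum channel: completely positive and trace preserving. -/
def IsCPTPMap {I O : Type} [Fintype I] [Fintype O]
    (F : Matrix I I ℂ →ₗ[ℂ] Matrix O O ℂ) : Prop :=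
  IsCPMap F ∧ ∀ M : Matrix I I ℂ, (F M).trace = M.trace

/-- Partial trace over the first tensor factor. -/
def ptr1 {O I : Type} [Fintype O] (C : Matrix (O × I) (O × I) ℂ) : Matrix I I ℂ :=
  fun i j => ∑ p : O, C (p, i) (p, j)

/-- Partial trace over the second tensor factor. -/
def ptr2 {O I : Type} [Fintype I] (C : Matrix (O × I) (O × I) ℂ) : Matrix O O ℂ :=
  fun p q => ∑ j : I, C (p, j) (q, j)

/-- `dyadM K = |K⟩⟩⟨⟨K|`, the rank-one operator associated with the
vectorization `|K⟩⟩ = ∑ i j, K i j |i⟩⊗|j⟩` of the matrix `K`. -/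
def dyadM {m n : Type} (K : Matrix m n ℂ) : Matrix (m × n) (m × n) ℂ :=
  fun p q => K p.1 p.2 * star (K q.1 q.2)


/-!
Conjugating by diagonal phase unitaries shows that `𝒞(E i j) p q` vanishes unless
`i = j ∧ p = q` or `i = p ∧ j = q`, and conjugating by permutation matrices shows that the
surviving entries take only three values, so `𝒞 ρ = λ ρ + κ diag ρ + μ (tr ρ) 1`. Covariance
under a single unitary mixing two basis vectors forces `κ = 0`. Hence `𝒞 = λ id + μ tr(·) 1`,
whose Choi operator is `λ |I⟩⟩⟨⟨I| + μ 1`, i.e. `α = d λ + μ` and `β = μ`. Trace preservation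
means `λ + d μ = 1`. The Choi operator is `(𝒞 ⊗ id)(|I⟩⟩⟨⟨I|)`, so complete positivity makes
it positive semidefinite; evaluating it on `|I⟩⟩` and on `|i⟩ ⊗ |j⟩` with `i ≠ j` gives
`α, β ≥ 0`.
-/

open Matrix

lemma Equiv.Perm.exists_apply_eq_pair {α : Type*} {a b c d : α} (hab : a ≠ b) (hcd : c ≠ d) :
    ∃ σ : Equiv.Perm α, σ a = c ∧ σ b = d := by
  obtain ⟨σ, hσ⟩ := Equiv.Perm.exists_extending_pair ![a, b] ![c, d]
    (by simp [Function.Injective, Fin.forall_fin_two, hab, hab.symm])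
    (by simp [Function.Injective, Fin.forall_fin_two, hcd, hcd.symm])
  exact ⟨σ, hσ 0, hσ 1⟩

/-- With `w = I` at one index and `1` elsewhere, `w i * conj (w j)` is `1`, `I`, `-I` or `1`
according to which of `i`, `j` is that index. -/
lemma ite_I_mul_star_ite_I_eq_imp {a b c d : Prop} [Decidable a] [Decidable b] [Decidable c]
    [Decidable d]
    (h : (if a then Complex.I else 1) * star (if b then Complex.I else 1) =
      (if c then Complex.I else 1) * star (if d then Complex.I else 1)) :
    ((a ↔ b) ∧ (c ↔ d)) ∨ ((a ↔ c) ∧ (b ↔ d)) := by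
  by_cases a <;> by_cases b <;> by_cases c <;> by_cases d <;>
    simp_all [Complex.ext_iff] <;> norm_num at h

namespace Matrix

variable {n R : Type*} [Fintype n] [DecidableEq n]

lemma diagonal_mem_unitaryGroup [CommRing R] [StarRing R] {w : n → R}
    (hw : ∀ k, star (w k) * w k = 1) : diagonal w ∈ unitaryGroup n R := by
  rw [mem_unitaryGroup_iff', star_eq_conjTranspose, diagonal_conjTranspose, diagonal_mul_diagonal,
    ← diagonal_one]
  exact congrArg diagonal (funext hw)

lemma diagonal_mul_mul_star_diagonal_apply [Semiring R] [StarRing R] (w : n → R)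
    (M : Matrix n n R) (p q : n) :
    (diagonal w * M * star (diagonal w)) p q = w p * M p q * star (w q) := by
  simp [star_eq_conjTranspose, diagonal_conjTranspose, diagonal_mul, mul_diagonal]

lemma permMatrix_mem_unitaryGroup [CommRing R] [StarRing R] (σ : Equiv.Perm n) :
    σ.permMatrix R ∈ unitaryGroup n R := by
  rw [mem_unitaryGroup_iff', star_eq_conjTranspose, conjTranspose_permMatrix, ← permMatrix_mul,
    mul_inv_cancel, permMatrix_one]

lemma permMatrix_mul_mul_star_permMatrix [Semiring R] [StarRing R] (σ : Equiv.Perm n)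
    (M : Matrix n n R) : σ.permMatrix R * M * star (σ.permMatrix R) = M.submatrix σ σ := by
  rw [star_eq_conjTranspose, conjTranspose_permMatrix, PEquiv.toMatrix_toPEquiv_mul,
    PEquiv.mul_toMatrix_toPEquiv, submatrix_submatrix]
  rfl

lemma mul_single_mul_star_apply [Semiring R] [StarRing R] (U : Matrix n n R) (i p q : n) :
    (U * single i i (1 : R) * star U) p q = U p i * star (U q i) := by
  simp [mul_apply, single_apply, star_eq_conjTranspose, ite_and]

/-- `U = ((1 + I) / 2) 1 + ((1 - I) / 2) P` is a square root of the transposition matrix `P`. -/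
lemma exists_mem_unitaryGroup_mul_star_ne_zero {z₀ z₁ : n} (hz : z₀ ≠ z₁) :
    ∃ U ∈ unitaryGroup n ℂ, U z₀ z₀ * star (U z₁ z₀) ≠ 0 := by
  set P := (Equiv.swap z₀ z₁).permMatrix ℂ
  have hPs : star P = P := by simp [P, star_eq_conjTranspose]
  have hPP : P * P = 1 := by
    nth_rewrite 1 [← hPs]
    exact mem_unitaryGroup_iff'.mp (permMatrix_mem_unitaryGroup _)
  refine ⟨((1 + Complex.I) / 2) • 1 + ((1 - Complex.I) / 2) • P, ?_, ?_⟩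
  · rw [mem_unitaryGroup_iff']
    simp only [star_add, star_smul, star_one, hPs, add_mul, mul_add, smul_mul_smul, one_mul,
      mul_one, hPP]
    match_scalars <;> simp [Complex.ext_iff] <;> norm_num
  · simp [P, hz.symm, Complex.ext_iff]

end Matrix

lemma LinearMap.apply_apply_eq_sum_single {n R : Type*} [Fintype n] [DecidableEq n]
    [CommSemiring R] (Φ : Matrix n n R →ₗ[R] Matrix n n R) (ρ : Matrix n n R) (p q : n) :
    Φ ρ p q = ∑ i, ∑ j, ρ i j * Φ (Matrix.single i j 1) p q := by
  have hsingle : ∀ i j, Matrix.single i j (ρ i j) = ρ i j • Matrix.single i j (1 : R) := by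
    simp [smul_single]
  conv_lhs => rw [matrix_eq_sum_single ρ]
  simp only [hsingle, map_sum, map_smul, Matrix.sum_apply, Matrix.smul_apply, smul_eq_mul]

def IsUnitarilyCovariant {n : Type*} [Fintype n] [DecidableEq n]
    (Φ : Matrix n n ℂ →ₗ[ℂ] Matrix n n ℂ) : Prop :=
  ∀ U ∈ unitaryGroup n ℂ, ∀ ρ, Φ (U * ρ * star U) = U * Φ ρ * star U

namespace IsUnitarilyCovariant

variable {n : Type*} [Fintype n] [DecidableEq n] {Φ : Matrix n n ℂ →ₗ[ℂ] Matrix n n ℂ}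
  (hΦ : IsUnitarilyCovariant Φ)
include hΦ

theorem mul_apply_single_apply_mul_star {w : n → ℂ} (hw : ∀ k, star (w k) * w k = 1)
    (i j p q : n) :
    w p * Φ (single i j 1) p q * star (w q) = w i * star (w j) * Φ (single i j 1) p q := by
  have hconj : diagonal w * single i j 1 * star (diagonal w) =
      (w i * star (w j)) • single i j 1 := by
    ext p q
    rw [diagonal_mul_mul_star_diagonal_apply]
    by_cases hp : i = p <;> by_cases hq : j = q <;> simp [hp, hq]
  have := congrFun₂ (hΦ _ (diagonal_mem_unitaryGroup hw) (single i j 1)) p q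
  rwa [hconj, map_smul, diagonal_mul_mul_star_diagonal_apply, eq_comm] at this

theorem apply_single_apply_eq_zero {i j p q : n}
    (h : ¬((i = j ∧ p = q) ∨ (i = p ∧ j = q))) : Φ (single i j 1) p q = 0 := by
  by_contra hne
  have hk : ∀ k, ((i = k ↔ j = k) ∧ (p = k ↔ q = k)) ∨ ((i = k ↔ p = k) ∧ (j = k ↔ q = k)) := by
    intro k
    refine ite_I_mul_star_ite_I_eq_imp (mul_right_cancel₀ hne ?_)
    have := hΦ.mul_apply_single_apply_mul_star (w := fun m => if m = k then Complex.I else 1)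
      (fun m => by by_cases m = k <;> simp_all) i j p q
    linear_combination -this
  have := hk i; have := hk j; have := hk p; have := hk q
  grind

theorem map_submatrix (σ : Equiv.Perm n) (ρ : Matrix n n ℂ) :
    Φ (ρ.submatrix σ σ) = (Φ ρ).submatrix σ σ := by
  simpa only [permMatrix_mul_mul_star_permMatrix] using hΦ _ (permMatrix_mem_unitaryGroup σ) ρ

theorem apply_single_apply_perm (σ : Equiv.Perm n) (i j p q : n) :
    Φ (single (σ i) (σ j) 1) (σ p) (σ q) = Φ (single i j 1) p q := by
  simpa using (congrFun₂ (hΦ.map_submatrix σ (single (σ i) (σ j) 1)) p q).symm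

theorem apply_apply_of_ne (ρ : Matrix n n ℂ) {p q : n} (hpq : p ≠ q) :
    Φ ρ p q = ρ p q * Φ (single p q 1) p q := by
  rw [Φ.apply_apply_eq_sum_single, Fintype.sum_eq_single p, Fintype.sum_eq_single q]
  · intro j hj
    rw [hΦ.apply_single_apply_eq_zero (by tauto), mul_zero]
  · intro i hi
    refine Finset.sum_eq_zero fun j _ => ?_
    rw [hΦ.apply_single_apply_eq_zero (by tauto), mul_zero]

theorem apply_apply_self (ρ : Matrix n n ℂ) (p : n) :
    Φ ρ p p = ∑ i, ρ i i * Φ (single i i 1) p p := by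
  rw [Φ.apply_apply_eq_sum_single]
  refine Finset.sum_congr rfl fun i _ => Fintype.sum_eq_single i fun j hj => ?_
  rw [hΦ.apply_single_apply_eq_zero (by grind), mul_zero]

theorem exists_eq_smul_add_smul_diagonal_add [Nontrivial n] :
    ∃ l k m : ℂ, ∀ ρ, Φ ρ = l • ρ + k • diagonal (diag ρ) + (m * trace ρ) • 1 := by
  obtain ⟨z₀, z₁, hz⟩ := exists_pair_ne n
  obtain ⟨a, b, hdiag⟩ : ∃ a b : ℂ, ∀ i p : n,
      Φ (single i i 1) p p = b + (a - b) * if i = p then 1 else 0 := by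
    refine ⟨Φ (single z₀ z₀ 1) z₀ z₀, Φ (single z₀ z₀ 1) z₁ z₁, fun i p => ?_⟩
    obtain rfl | hip := eq_or_ne i p
    · simpa using hΦ.apply_single_apply_perm (Equiv.swap z₀ i) z₀ z₀ z₀ z₀
    · obtain ⟨σ, rfl, rfl⟩ := Equiv.Perm.exists_apply_eq_pair hz hip
      simpa [hip] using hΦ.apply_single_apply_perm σ z₀ z₀ z₁ z₁
  obtain ⟨c, hoff⟩ : ∃ c : ℂ, ∀ p q : n, p ≠ q → Φ (single p q 1) p q = c := by
    refine ⟨Φ (single z₀ z₁ 1) z₀ z₁, fun p q hpq => ?_⟩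
    obtain ⟨σ, rfl, rfl⟩ := Equiv.Perm.exists_apply_eq_pair hz hpq
    exact hΦ.apply_single_apply_perm σ z₀ z₁ z₀ z₁
  refine ⟨c, a - b - c, b, fun ρ => ?_⟩
  ext p q
  obtain rfl | hpq := eq_or_ne p q
  · rw [hΦ.apply_apply_self]
    simp [hdiag, trace, mul_add, Finset.sum_add_distrib, ← Finset.sum_mul]
    ring
  · simp [hΦ.apply_apply_of_ne ρ hpq, hoff p q hpq, hpq, mul_comm]

theorem eq_zero_of_eq_smul_add_smul_diagonal_add [Nontrivial n] {l k m : ℂ}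
    (h : ∀ ρ, Φ ρ = l • ρ + k • diagonal (diag ρ) + (m * trace ρ) • 1) : k = 0 := by
  obtain ⟨z₀, z₁, hz⟩ := exists_pair_ne n
  obtain ⟨U, hU, hUz⟩ := exists_mem_unitaryGroup_mul_star_ne_zero hz
  have hconj := hΦ U hU (single z₀ z₀ 1)
  rw [h, h] at hconj
  have := congrFun₂ hconj z₀ z₁
  simp [Matrix.mul_add, Matrix.add_mul, mem_unitaryGroup_iff.mp hU, hz, diagonal_single,
    -smul_single] at this
  exact this.resolve_right (by rwa [mul_single_mul_star_apply])

theorem exists_eq_smul_add_trace_smul_one [Nontrivial n] :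
    ∃ l m : ℂ, ∀ ρ, Φ ρ = l • ρ + (m * trace ρ) • 1 := by
  obtain ⟨l, k, m, h⟩ := hΦ.exists_eq_smul_add_smul_diagonal_add
  obtain rfl := hΦ.eq_zero_of_eq_smul_add_smul_diagonal_add h
  exact ⟨l, m, by simpa using h⟩

end IsUnitarilyCovariant

lemma choiFun_apply {I O : Type} [Fintype I] [DecidableEq I]
    (F : Matrix I I ℂ → Matrix O O ℂ) (p q : O) (i j : I) :
    choiFun F (p, i) (q, j) = F (single i j 1) p q := by
  simp [choiFun, Matrix.sum_apply, single, ite_and]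

lemma tensorId_dyadM_one {I O : Type} [Fintype I] [DecidableEq I]
    (F : Matrix I I ℂ → Matrix O O ℂ) : tensorId F (dyadM (1 : Matrix I I ℂ)) = choiFun F := by
  ext ⟨p, i⟩ ⟨q, j⟩
  rw [choiFun_apply]
  refine congrArg (fun M => F M p q) (ext fun i' j' => ?_)
  simp only [dyadM, one_apply, single_apply, apply_ite (star : ℂ → ℂ), star_one, star_zero]
  grind

lemma dyadM_eq_vecMulVec {m n : Type} (K : Matrix m n ℂ) :
    dyadM K = vecMulVec (fun p => K p.1 p.2) (star fun p => K p.1 p.2) := rfl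

lemma posSemidef_dyadM {m n : Type} [Fintype m] [Fintype n] (K : Matrix m n ℂ) :
    (dyadM K).PosSemidef :=
  posSemidef_vecMulVec_self_star _

lemma IsCPMap.posSemidef_choiFun {d : ℕ} {O : Type} [Fintype O]
    {F : Matrix (Fin d) (Fin d) ℂ →ₗ[ℂ] Matrix O O ℂ} (hF : IsCPMap F) :
    (choiFun F).PosSemidef := by
  rw [← tensorId_dyadM_one]
  exact hF d _ (posSemidef_dyadM 1)

lemma choiFun_smul_add_trace_smul_one {n : Type} [Fintype n] [DecidableEq n] (l m : ℂ) :
    choiFun (fun ρ : Matrix n n ℂ => l • ρ + (m * trace ρ) • 1) = l • dyadM 1 + m • 1 := by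
  ext ⟨p, i⟩ ⟨q, j⟩
  rw [choiFun_apply]
  by_cases hij : i = j <;> simp [dyadM, one_apply, single_apply, hij] <;> grind

lemma nonneg_of_posSemidef_smul_dyadM_one_add_smul_one {n : Type} [DecidableEq n]
    [Nontrivial n] {l m : ℂ} (h : (l • dyadM (1 : Matrix n n ℂ) + m • 1).PosSemidef) :
    0 ≤ m := by
  obtain ⟨z₀, z₁, hz⟩ := exists_pair_ne n
  simpa [dyadM, hz] using h.diag_nonneg (i := (z₀, z₁))

lemma card_mul_add_nonneg_of_posSemidef_smul_dyadM_one_add_smul_one {n : Type} [Fintype n]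
    [DecidableEq n] [Nonempty n] {l m : ℂ}
    (h : (l • dyadM (1 : Matrix n n ℂ) + m • 1).PosSemidef) :
    0 ≤ Fintype.card n * l + m := by
  set v : n × n → ℂ := fun p => (1 : Matrix n n ℂ) p.1 p.2
  have hv : star v ⬝ᵥ v = Fintype.card n := by
    simp [v, dotProduct, one_apply, Fintype.sum_prod_type]
  have hquad : star v ⬝ᵥ ((l • vecMulVec v (star v) + m • 1) *ᵥ v) =
      Fintype.card n * (Fintype.card n * l + m) := by
    rw [add_mulVec, smul_mulVec, smul_mulVec, vecMulVec_mulVec, one_mulVec]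
    simp [dotProduct_add, dotProduct_smul, hv]
    ring
  have hcard : (Fintype.card n : ℂ) ≠ 0 := Nat.cast_ne_zero.mpr Fintype.card_ne_zero
  rw [dyadM_eq_vecMulVec] at h
  rw [← inv_mul_cancel_left₀ hcard (_ * l + m)]
  exact mul_nonneg (inv_nonneg.mpr (Nat.cast_nonneg _)) (hquad ▸ h.dotProduct_mulVec_nonneg v)

/-- a linear map on `L(ℂ^d)` covariant under conjugation by
every unitary (`𝒞(UρU†) = U𝒞(ρ)U†`) has Choi operator of the form
`α (1/d)|I⟩⟩⟨⟨I| + β (I - (1/d)|I⟩⟩⟨⟨I|)`; moreover `α + (d²-1)β = d` if `𝒞` is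
trace preserving, and `α, β ≥ 0` if `𝒞` is completely positive. -/
theorem stmt11 (d : ℕ) (hd : 2 ≤ d)
    (𝒞 : Matrix (Fin d) (Fin d) ℂ →ₗ[ℂ] Matrix (Fin d) (Fin d) ℂ)
    (hcov : ∀ U ∈ Matrix.unitaryGroup (Fin d) ℂ,
      ∀ ρ : Matrix (Fin d) (Fin d) ℂ, 𝒞 (U * ρ * star U) = U * 𝒞 ρ * star U) :
    ∃ α β : ℂ,
      choiFun ⇑𝒞 =
        α • ((1 / (d : ℂ)) • dyadM (1 : Matrix (Fin d) (Fin d) ℂ)) +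
        β • ((1 : Matrix (Fin d × Fin d) (Fin d × Fin d) ℂ) -
              (1 / (d : ℂ)) • dyadM (1 : Matrix (Fin d) (Fin d) ℂ)) ∧
      ((∀ A : Matrix (Fin d) (Fin d) ℂ, (𝒞 A).trace = A.trace) →
        α + ((d : ℂ) ^ 2 - 1) * β = (d : ℂ)) ∧
      (IsCPMap 𝒞 → 0 ≤ α ∧ 0 ≤ β) := by
  have : Nontrivial (Fin d) := Fin.nontrivial_iff_two_le.mpr hd
  obtain ⟨l, m, h𝒞⟩ := IsUnitarilyCovariant.exists_eq_smul_add_trace_smul_one hcov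
  have hchoi : choiFun 𝒞 = l • dyadM 1 + m • 1 := by
    rw [← choiFun_smul_add_trace_smul_one]
    exact congrArg choiFun (funext h𝒞)
  have hd₀ : (d : ℂ) ≠ 0 := by exact_mod_cast (by omega : d ≠ 0)
  refine ⟨d * l + m, m, ?_, fun htp => ?_, fun hcp => ?_⟩
  · rw [hchoi]
    match_scalars <;> field_simp; ring
  · have htr := htp (single ⟨0, by omega⟩ ⟨0, by omega⟩ 1)
    simp [h𝒞] at htr
    linear_combination (d : ℂ) * htr
  · have hpsd := hcp.posSemidef_choiFun
    rw [hchoi] at hpsd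
    refine ⟨?_, nonneg_of_posSemidef_smul_dyadM_one_add_smul_one hpsd⟩
    simpa using card_mul_add_nonneg_of_posSemidef_smul_dyadM_one_add_smul_one hpsd
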